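/- arXiv:2212.04880 — 2 statements merged into one kernel-verified Lean document; each statement's English description precedes it below -/
import Mathlib

section
/- Every chordal graph on n vertices has at most n maximal cliques. -/
open SimpleGraph

attribute [local instance] Classical.propDecidable
set_option linter.unusedSectionVars false

variable {V : Type*} [Fintype V] [DecidableEq V]

/-- A graph is chordal if it has no induced cycle of length at least 4. -/
def IsChordal (G : SimpleGraph V) : Prop :=
  ∀ n : ℕ, 4 ≤ n →
    ¬ ∃ f : Fin n ↪ V, ∀ i j, (cycleGraph n).Adj i j ↔ G.Adj (f i) (f j)

/-- `K` is a maximal clique of `G`. -/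
def MaxClique (G : SimpleGraph V) (K : Finset V) : Prop :=
  G.IsClique (K : Set V) ∧ ∀ K' : Finset V, G.IsClique (K' : Set V) → K ⊆ K' → K = K'

/-- The type of maximal cliques of `G`. -/
abbrev CV (G : SimpleGraph V) := {K : Finset V // MaxClique G K}

/-- `S` is a `u`-`v` separator of `G`: `u, v ∉ S` and every `u`-`v` walk meets `S`. -/
def Separates (G : SimpleGraph V) (S : Finset V) (u v : V) : Prop :=
  u ∉ S ∧ v ∉ S ∧ ∀ p : G.Walk u v, ∃ x ∈ p.support, x ∈ S

lemma Separates.symm' {G : SimpleGraph V} {S : Finset V} {u v : V}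
    (h : Separates G S u v) : Separates G S v u := by
  obtain ⟨hu, hv, h⟩ := h
  refine ⟨hv, hu, fun p => ?_⟩
  obtain ⟨x, hx, hxS⟩ := h p.reverse
  refine ⟨x, ?_, hxS⟩
  simpa using hx

/-- `S` is a minimal `u`-`v` separator of `G`. -/
def MinSeparates (G : SimpleGraph V) (S : Finset V) (u v : V) : Prop :=
  Separates G S u v ∧ ∀ S' : Finset V, S' ⊂ S → ¬ Separates G S' u v

lemma MinSeparates.symm' {G : SimpleGraph V} {S : Finset V} {u v : V}
    (h : MinSeparates G S u v) : MinSeparates G S v u :=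
  ⟨h.1.symm', fun S' hS' hc => h.2 S' hS' hc.symm'⟩

/-- The clique graph `C(G)` of `G`: vertices are the maximal cliques; `K` and `K'` are
adjacent iff `K ∩ K'` is a minimal `u`-`v` separator for all `u ∈ K \ K'`, `v ∈ K' \ K`. -/
def cliqueGraph (G : SimpleGraph V) : SimpleGraph (CV G) where
  Adj K K' := K ≠ K' ∧
    ∀ u ∈ K.1 \ K'.1, ∀ v ∈ K'.1 \ K.1, MinSeparates G (K.1 ∩ K'.1) u v
  symm := by
    constructor
    rintro K K' ⟨hne, h⟩
    refine ⟨hne.symm, fun u hu v hv => ?_⟩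
    rw [Finset.inter_comm]
    exact (h v hv u hu).symm'
  loopless := by constructor; rintro K ⟨hne, -⟩; exact hne rfl

/-- A clique tree of `G`: a tree on the maximal cliques of `G` such that for every vertex
`v`, the maximal cliques containing `v` induce a connected subgraph (a subtree). -/
def IsCliqueTree (G : SimpleGraph V) (T : SimpleGraph (CV G)) : Prop :=
  T.IsTree ∧ ∀ v : V, (T.induce {K : CV G | v ∈ K.1}).Connected

/-- `C(G) ⊖ S`: the clique graph with all edges labeled `S` deleted. -/
def deleteLabel (G : SimpleGraph V) (S : Finset V) : SimpleGraph (CV G) where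
  Adj K K' := (cliqueGraph G).Adj K K' ∧ K.1 ∩ K'.1 ≠ S
  symm := by
    constructor
    rintro K K' ⟨h, hS⟩
    exact ⟨h.symm, by rwa [Finset.inter_comm]⟩
  loopless := by constructor; rintro K ⟨h, -⟩; exact h.ne rfl

/-- `w` is the minimum edge weight of `C(G)` (weights are `|K ∩ K'|`). -/
def IsMinEdgeWeight (G : SimpleGraph V) (w : ℕ) : Prop :=
  (∃ K K' : CV G, (cliqueGraph G).Adj K K' ∧ (K.1 ∩ K'.1).card = w) ∧
    ∀ K K' : CV G, (cliqueGraph G).Adj K K' → w ≤ (K.1 ∩ K'.1).card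

/-- `C(G)` with all edges of (minimum) weight `w` deleted; its connected components are
the units. -/
def unitGraph (G : SimpleGraph V) (w : ℕ) : SimpleGraph (CV G) where
  Adj K K' := (cliqueGraph G).Adj K K' ∧ (K.1 ∩ K'.1).card ≠ w
  symm := by
    constructor
    rintro K K' ⟨h, hw⟩
    exact ⟨h.symm, by rwa [Finset.inter_comm]⟩
  loopless := by constructor; rintro K ⟨h, -⟩; exact h.ne rfl

/-- The type of units. -/
abbrev LUnit (G : SimpleGraph V) (w : ℕ) := (unitGraph G w).ConnectedComponent

/-- The unit containing a maximal clique `K`. -/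
def umk (G : SimpleGraph V) (w : ℕ) (K : CV G) : LUnit G w :=
  (unitGraph G w).connectedComponentMk K

/-- The layer structure: units are its vertices; two units are adjacent iff some
edge of `C(G)` crosses them. -/
def layerGraph (G : SimpleGraph V) (w : ℕ) : SimpleGraph (LUnit G w) where
  Adj U U' := U ≠ U' ∧ ∃ K K' : CV G,
    (cliqueGraph G).Adj K K' ∧ umk G w K = U ∧ umk G w K' = U'
  symm := by
    constructor
    rintro U U' ⟨hne, K, K', hadj, hK, hK'⟩
    exact ⟨hne.symm, K', K, hadj.symm, hK', hK⟩
  loopless := by constructor; rintro U ⟨hne, -⟩; exact hne rfl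

/-- All edges of `C(G)` crossing `U` and `U'` have the label `S`. -/
def CrossLabel (G : SimpleGraph V) (w : ℕ) (U U' : LUnit G w) (S : Finset V) : Prop :=
  ∀ K K' : CV G, (cliqueGraph G).Adj K K' → umk G w K = U → umk G w K' = U' →
    K.1 ∩ K'.1 = S

/-- `𝒱(U)`: the vertices of `G` contained in some maximal clique of the unit `U`. -/
def unitVerts (G : SimpleGraph V) (w : ℕ) (U : LUnit G w) : Set V :=
  {x | ∃ K : CV G, umk G w K = U ∧ x ∈ K.1}

/-- An MCS ordering of `G`: at each step, the visited vertex has the maximum number of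
already visited neighbors among unvisited vertices. -/
def IsMCSOrdering (G : SimpleGraph V) (σ : Fin (Fintype.card V) ≃ V) : Prop :=
  ∀ i j : Fin (Fintype.card V), i ≤ j →
    (Finset.univ.filter fun l => l < i ∧ G.Adj (σ l) (σ j)).card ≤
      (Finset.univ.filter fun l => l < i ∧ G.Adj (σ l) (σ i)).card

/-- A Prim ordering of `C(G)`: each vertex after the first is incident to an edge of
maximum weight among all edges between visited and unvisited vertices. -/
def IsPrimOrdering (G : SimpleGraph V) (π : Fin (Fintype.card (CV G)) ≃ CV G) : Prop :=
  ∀ i : Fin (Fintype.card (CV G)), 0 < (i : ℕ) →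
    ∃ j, j < i ∧ (cliqueGraph G).Adj (π j) (π i) ∧
      ∀ j' k, j' < i → i ≤ k → (cliqueGraph G).Adj (π j') (π k) →
        ((π j').1 ∩ (π k).1).card ≤ ((π j).1 ∩ (π i).1).card

/-- The position in `π` of the first maximal clique containing `x`. -/
noncomputable def firstIdx (G : SimpleGraph V)
    (π : Fin (Fintype.card (CV G)) ≃ CV G) (x : V) : ℕ :=
  sInf {j : ℕ | ∃ h : j < Fintype.card (CV G), x ∈ (π ⟨j, h⟩).1}

/-- `σ` is a generation of `π`. -/
def IsGeneration (G : SimpleGraph V) (π : Fin (Fintype.card (CV G)) ≃ CV G)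
    (σ : Fin (Fintype.card V) ≃ V) : Prop :=
  ∀ x y : V, firstIdx G π x < firstIdx G π y → σ.symm x < σ.symm y

/-- `σ` is a linear extension of the relation `R`. -/
def ExtendsR (R : V → V → Prop) (σ : Fin (Fintype.card V) ≃ V) : Prop :=
  ∀ x y : V, R x y → x ≠ y → σ.symm x < σ.symm y

/-- `π` respects `R`. -/
def RespectsR (G : SimpleGraph V) (R : V → V → Prop)
    (π : Fin (Fintype.card (CV G)) ≃ CV G) : Prop :=
  ∀ x y : V, R x y → x ≠ y → firstIdx G π x ≤ firstIdx G π y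

/-- The set of vertices of `G` contained in one of the first `i` cliques of `π`. -/
def primPrefixVerts (G : SimpleGraph V) (π : Fin (Fintype.card (CV G)) ≃ CV G)
    (i : ℕ) : Set V :=
  {x | ∃ j : Fin (Fintype.card (CV G)), (j : ℕ) < i ∧ x ∈ (π j).1}

/-!
A chordal graph has a simplicial vertex, i.e. one whose neighbourhood is a clique. This is
Dirac's lemma, proved in the stronger form that every non-neighbour `w` of a vertex `u` can be
replaced by a simplicial non-neighbour of `u`: the vertices that see the component `C` of `w` in
`G - N[u]` without lying in it are neighbours of `u`, and any two of them are adjacent, since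
otherwise a shortest path between them through `C` would close up with `u` to an induced cycle of
length at least four. Induction on the graph induced by `C` and these vertices then yields a
simplicial vertex inside `C`, whose neighbourhood does not leave that graph.

The only maximal clique through a simplicial vertex `v` is its closed neighbourhood, and every other
maximal clique stays maximal once `v` is deleted; so deleting simplicial vertices one at a time
shows that there are at most as many maximal cliques as vertices.
-/

open Finset

namespace SimpleGraph

variable {α : Type*} {G : SimpleGraph α}

theorem cycleGraph_adj_iff_val {m : ℕ} {i j : Fin (m + 2)} :
    (cycleGraph (m + 2)).Adj i j ↔ (i : ℕ) + 1 = j ∨ (j : ℕ) + 1 = i ∨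
      ((i : ℕ) = 0 ∧ (j : ℕ) = m + 1) ∨ ((j : ℕ) = 0 ∧ (i : ℕ) = m + 1) := by
  have sub_eq_one {a b : ℕ} (ha : a < m + 2) (hb : b < m + 2) :
      (m + 2 - b + a) % (m + 2) = 1 ↔ a = b + 1 ∨ (a = 0 ∧ b = m + 1) := by
    rcases Nat.lt_or_ge (m + 2 - b + a) (m + 2) with h | h
    · rw [Nat.mod_eq_of_lt h]; omega
    · rw [Nat.mod_eq_sub_mod h, Nat.mod_eq_of_lt (by omega)]; omega
  rw [cycleGraph_adj', Fin.val_sub, Fin.val_sub, sub_eq_one i.isLt j.isLt,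
    sub_eq_one j.isLt i.isLt]
  omega

theorem Walk.adj_getVert_iff_of_length_eq_dist {a b : α} {p : G.Walk a b}
    (hp : p.length = G.dist a b) {i j : ℕ} (hi : i ≤ p.length) (hj : j ≤ p.length) :
    G.Adj (p.getVert i) (p.getVert j) ↔ i + 1 = j ∨ j + 1 = i := by
  have shortcut {i j : ℕ} (hij : i < j) (hj : j ≤ p.length)
      (h : G.Adj (p.getVert i) (p.getVert j)) : j = i + 1 := by
    have := G.dist_le ((p.take i).append (.cons h (p.drop j)))
    simp only [Walk.length_append, Walk.length_cons, Walk.take_length, Walk.drop_length] at this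
    omega
  constructor
  · intro h
    rcases lt_trichotomy i j with hij | rfl | hij
    · exact .inl (shortcut hij hj h).symm
    · exact absurd h (G.loopless.irrefl _)
    · exact .inr (shortcut hij hi h.symm).symm
  · rintro (rfl | rfl)
    · exact p.adj_getVert_succ (by omega)
    · exact (p.adj_getVert_succ (by omega)).symm

def ReachableIn (G : SimpleGraph α) (F : Set α) (a b : α) : Prop :=
  ∃ p : G.Walk a b, ∀ z ∈ p.support, z ∈ F

theorem ReachableIn.mem_right {F : Set α} {a b : α} (h : G.ReachableIn F a b) :
    b ∈ F :=
  let ⟨p, hp⟩ := h; hp b p.end_mem_support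

theorem ReachableIn.trans_adj {F : Set α} {a b c : α} (h : G.ReachableIn F a b)
    (hbc : G.Adj b c) (hc : c ∈ F) : G.ReachableIn F a c := by
  obtain ⟨p, hp⟩ := h
  refine ⟨p.concat hbc, fun z hz => ?_⟩
  rw [Walk.support_concat, List.mem_append, List.mem_singleton] at hz
  rcases hz with hz | rfl
  exacts [hp z hz, hc]

end SimpleGraph

section

variable {α : Type*} {G : SimpleGraph α}

theorem IsChordal.false_of_chordless_cycle (hG : IsChordal G) {m : ℕ} (hm : 2 ≤ m)
    {g : ℕ → α} {z : α} (hinj : Set.InjOn g {i | i ≤ m}) (hgz : ∀ i ≤ m, g i ≠ z)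
    (hg : ∀ i ≤ m, ∀ j ≤ m, G.Adj (g i) (g j) ↔ i + 1 = j ∨ j + 1 = i)
    (hz : ∀ i ≤ m, G.Adj (g i) z ↔ i = 0 ∨ i = m) : False := by
  let f : Fin (m + 2) → α := fun k => if (k : ℕ) ≤ m then g k else z
  have hf : f.Injective := by
    intro i j hij
    simp only [f] at hij
    split_ifs at hij with hi hj hj
    · exact Fin.ext (hinj hi hj hij)
    · exact absurd hij (hgz i hi)
    · exact absurd hij.symm (hgz j hj)
    · exact Fin.ext (by omega)
  refine hG (m + 2) (by omega) ⟨⟨f, hf⟩, fun i j => ?_⟩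
  rw [cycleGraph_adj_iff_val]
  simp only [Function.Embedding.coeFn_mk, f]
  split_ifs with hi hj hj
  · rw [hg i hi j hj]; omega
  · rw [hz i hi]; omega
  · rw [G.adj_comm, hz j hj]; omega
  · simp only [SimpleGraph.irrefl, iff_false]; omega

theorem IsChordal.adj_of_walk (hG : IsChordal G) {x y u : α} (hxy : x ≠ y)
    (hxu : G.Adj x u) (hyu : G.Adj y u) (p : G.Walk x y)
    (hp : ∀ z ∈ p.support, z = x ∨ z = y ∨ (z ≠ u ∧ ¬ G.Adj z u)) : G.Adj x y := by
  by_contra hnxy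
  let T : Set α := {z | z = x ∨ z = y ∨ (z ≠ u ∧ ¬ G.Adj z u)}
  obtain ⟨q, hq⟩ := Reachable.exists_walk_length_eq_dist ⟨p.induce T hp⟩
  let g : ℕ → α := fun i => q.getVert i
  have hg : ∀ i ≤ q.length, ∀ j ≤ q.length, G.Adj (g i) (g j) ↔ i + 1 = j ∨ j + 1 = i :=
    fun i hi j hj => Walk.adj_getVert_iff_of_length_eq_dist hq hi hj
  have hinj : Set.InjOn g {i | i ≤ q.length} :=
    Subtype.val_injective.comp_injOn (q.isPath_of_length_eq_dist hq).getVert_injOn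
  have hg0 : g 0 = x := by simp [g]
  have hgm : g q.length = y := by simp [g]
  have hm : 2 ≤ q.length := by
    have h0 : q.length ≠ 0 := fun h => hxy (by rw [← hg0, ← hgm, h])
    have h1 : q.length ≠ 1 := fun h => hnxy (by
      rw [← hg0, ← hgm]; exact (hg 0 (by omega) q.length le_rfl).2 (.inl h.symm))
    omega
  have hT : ∀ i, g i ∈ T := fun i => (q.getVert i).2
  refine hG.false_of_chordless_cycle (z := u) hm hinj (fun i _ h => ?_) hg
    (fun i hi => ⟨fun h => ?_, ?_⟩)
  · rcases hT i with h' | h' | h'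
    · exact hxu.ne (h'.symm.trans h)
    · exact hyu.ne (h'.symm.trans h)
    · exact h'.1 h
  · by_contra hi'
    obtain ⟨hi0, him⟩ := not_or.1 hi'
    rcases hT i with h' | h' | h'
    · exact hi0 (hinj hi (Nat.zero_le _) (h'.trans hg0.symm))
    · exact him (hinj hi (le_refl q.length) (h'.trans hgm.symm))
    · exact h'.2 h
  · rintro (rfl | rfl)
    · rwa [hg0]
    · rwa [hgm]

theorem IsChordal.adj_of_reachableIn (hG : IsChordal G) {F : Set α} {u w x y cx cy : α}
    (hF : ∀ z ∈ F, z ≠ u ∧ ¬ G.Adj z u) (hxy : x ≠ y) (hxu : G.Adj x u) (hyu : G.Adj y u)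
    (hcx : G.ReachableIn F w cx) (hcy : G.ReachableIn F w cy)
    (hxcx : G.Adj x cx) (hycy : G.Adj y cy) : G.Adj x y := by
  obtain ⟨px, hpx⟩ := hcx
  obtain ⟨py, hpy⟩ := hcy
  refine hG.adj_of_walk hxy hxu hyu (.cons hxcx (px.reverse.append (py.concat hycy.symm)))
    fun z hz => ?_
  simp only [Walk.support_cons, List.mem_cons, Walk.mem_support_append_iff, Walk.support_reverse,
    List.mem_reverse, Walk.support_concat, List.mem_append, List.not_mem_nil, or_false] at hz
  rcases hz with rfl | hz | hz | rfl
  · exact .inl rfl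
  · exact .inr (.inr (hF z (hpx z hz)))
  · exact .inr (.inr (hF z (hpy z hz)))
  · exact .inr (.inl rfl)

def IsSimplicialIn (G : SimpleGraph α) (s : Finset α) (v : α) : Prop :=
  v ∈ s ∧ G.IsClique (↑s ∩ G.neighborSet v)

theorem IsSimplicialIn.of_subset {s t : Finset α} {v : α} (hv : IsSimplicialIn G t v)
    (hts : t ⊆ s) (hN : ∀ x ∈ s, G.Adj v x → x ∈ t) : IsSimplicialIn G s v :=
  .intro (hts hv.1) (hv.2.subset fun x hx => Set.mem_inter (hN x hx.1 hx.2) hx.2)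

theorem exists_isSimplicialIn_mem_of_isClique_sdiff {s : Finset α} {C : Set α} {w : α}
    (hs : ∀ a ∈ s, ∀ b ∈ s, b ≠ a → ¬ G.Adj a b →
      ∃ v, IsSimplicialIn G s v ∧ v ≠ a ∧ ¬ G.Adj a v)
    (hCs : C ⊆ s) (hw : w ∈ C) (hsC : G.IsClique (↑s \ C)) :
    ∃ v ∈ C, IsSimplicialIn G s v := by
  by_cases hclique : G.IsClique (s : Set α)
  · exact ⟨w, hw, hCs hw, hclique.subset Set.inter_subset_left⟩
  have outside : ∀ a ∈ s, a ∉ C → ∀ b ∈ s, b ≠ a → ¬ G.Adj a b →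
      ∃ v ∈ C, IsSimplicialIn G s v := by
    intro a ha haC b hb hba hab
    obtain ⟨v, hv, hva, hav⟩ := hs a ha b hb hba hab
    by_cases hvC : v ∈ C
    · exact ⟨v, hvC, hv⟩
    · exact absurd (hsC ⟨ha, haC⟩ ⟨hv.1, hvC⟩ hva.symm) hav
  obtain ⟨a, ha, b, hb, hab, hnab⟩ : ∃ a ∈ s, ∃ b ∈ s, a ≠ b ∧ ¬ G.Adj a b := by
    simpa [IsClique, Set.Pairwise] using hclique
  by_cases haC : a ∈ C
  · obtain ⟨v, hv, hva, hav⟩ := hs a ha b hb hab.symm hnab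
    by_cases hvC : v ∈ C
    · exact ⟨v, hvC, hv⟩
    · exact outside v hv.1 hvC a ha hva.symm (fun h => hav h.symm)
  · exact outside a ha haC b hb hab.symm hnab

theorem IsChordal.exists_isSimplicialIn_not_adj (hG : IsChordal G) (s : Finset α) :
    ∀ u ∈ s, ∀ w ∈ s, w ≠ u → ¬ G.Adj u w →
      ∃ v, IsSimplicialIn G s v ∧ v ≠ u ∧ ¬ G.Adj u v := by
  induction s using Finset.strongInduction with
  | H s ih =>
  intro u hu w hw hwu huw
  let F : Set α := {z | z ∈ s ∧ z ≠ u ∧ ¬ G.Adj u z}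
  let C : Set α := {c | G.ReachableIn F w c}
  let t : Finset α := {x ∈ s | x ∈ C ∨ ∃ c ∈ C, G.Adj x c}
  have hCF : C ⊆ F := fun c hc => hc.mem_right
  have hCt : C ⊆ t := fun c hc => mem_filter.2 ⟨(hCF hc).1, .inl hc⟩
  have hut : u ∉ t := by
    intro hu'
    rcases (mem_filter.1 hu').2 with huC | ⟨c, hc, huc⟩
    exacts [(hCF huC).2.1 rfl, (hCF hc).2.2 huc]
  have hts : t ⊂ s := filter_ssubset.2 ⟨u, hu, fun h => hut (mem_filter.2 ⟨hu, h⟩)⟩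
  have hsep : ∀ x ∈ t, x ∉ C → G.Adj x u ∧ ∃ c ∈ C, G.Adj x c := by
    intro x hx hxC
    obtain ⟨hxs, hx⟩ := mem_filter.1 hx
    obtain ⟨c, hc, hxc⟩ := hx.resolve_left hxC
    refine ⟨?_, c, hc, hxc⟩
    by_contra hxu
    have hxu' : x ≠ u := fun h => (hCF hc).2.2 (h ▸ hxc)
    exact hxC (hc.trans_adj hxc.symm ⟨hxs, hxu', fun h => hxu h.symm⟩)
  have hclique : G.IsClique (↑t \ C) := by
    rintro x ⟨hxt, hxC⟩ y ⟨hyt, hyC⟩ hxy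
    obtain ⟨hxu, cx, hcx, hxcx⟩ := hsep x hxt hxC
    obtain ⟨hyu, cy, hcy, hycy⟩ := hsep y hyt hyC
    exact hG.adj_of_reachableIn (fun z hz => ⟨hz.2.1, fun h => hz.2.2 h.symm⟩) hxy hxu hyu
      hcx hcy hxcx hycy
  have hwC : w ∈ C := ⟨.nil, by simpa using ⟨hw, hwu, huw⟩⟩
  obtain ⟨v, hvC, hv⟩ := exists_isSimplicialIn_mem_of_isClique_sdiff (ih t hts) hCt hwC hclique
  refine ⟨v, hv.of_subset (filter_subset _ _) fun x hxs hvx => ?_, (hCF hvC).2⟩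
  exact mem_filter.2 ⟨hxs, .inr ⟨v, hvC, hvx.symm⟩⟩

theorem IsChordal.exists_isSimplicialIn (hG : IsChordal G) {s : Finset α} (hs : s.Nonempty) :
    ∃ v, IsSimplicialIn G s v := by
  by_cases hclique : G.IsClique (s : Set α)
  · obtain ⟨v, hv⟩ := hs
    exact ⟨v, hv, hclique.subset Set.inter_subset_left⟩
  obtain ⟨u, hu, w, hw, huw, hnuw⟩ : ∃ u ∈ s, ∃ w ∈ s, u ≠ w ∧ ¬ G.Adj u w := by
    simpa [IsClique, Set.Pairwise] using hclique
  obtain ⟨v, hv, -⟩ := hG.exists_isSimplicialIn_not_adj s u hu w hw huw.symm hnuw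
  exact ⟨v, hv⟩

/-- The empty clique is excluded: it is maximal when `s = ∅`. -/
noncomputable def maximalCliquesIn (G : SimpleGraph α) (s : Finset α) : Finset (Finset α) :=
  {K ∈ s.powerset |
    K.Nonempty ∧ Maximal (fun L : Finset α => L ⊆ s ∧ G.IsClique (L : Set α)) K}

theorem MaxClique.mem_maximalCliquesIn_univ [Fintype α] [Nonempty α] {K : Finset α}
    (hK : MaxClique G K) : K ∈ maximalCliquesIn G univ := by
  have hKne : K.Nonempty := by
    obtain ⟨v⟩ := ‹Nonempty α›
    by_contra hK'
    have := hK.2 {v} (by simp) (by simp [not_nonempty_iff_eq_empty.1 hK'])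
    simp [not_nonempty_iff_eq_empty.1 hK'] at this
  exact mem_filter.2 ⟨mem_powerset.2 (subset_univ _), hKne, ⟨subset_univ _, hK.1⟩,
    fun L hL hKL => (hK.2 L hL.2 hKL).ge⟩

variable [DecidableEq α]

theorem IsSimplicialIn.eq_of_mem_maximalCliquesIn {s K : Finset α} {v : α}
    (hv : IsSimplicialIn G s v) (hK : K ∈ maximalCliquesIn G s) (hvK : v ∈ K) :
    K = insert v {x ∈ s | G.Adj v x} := by
  obtain ⟨-, -, ⟨hKs, hK⟩, hmax⟩ := mem_filter.1 hK
  have hKN : K ⊆ insert v {x ∈ s | G.Adj v x} := by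
    intro x hx
    rcases eq_or_ne x v with rfl | hxv
    · exact mem_insert_self _ _
    · exact mem_insert_of_mem (mem_filter.2 ⟨hKs hx, hK hvK hx hxv.symm⟩)
  refine le_antisymm hKN (hmax ⟨insert_subset hv.1 (filter_subset _ _), ?_⟩ hKN)
  rw [coe_insert, coe_filter]
  exact hv.2.insert fun x hx _ => hx.2

theorem mem_maximalCliquesIn_erase {s K : Finset α} {v : α} (hK : K ∈ maximalCliquesIn G s)
    (hvK : v ∉ K) : K ∈ maximalCliquesIn G (s.erase v) := by
  obtain ⟨-, hKne, hmax⟩ := mem_filter.1 hK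
  have hKs : K ⊆ s.erase v := fun x hx =>
    mem_erase.2 ⟨ne_of_mem_of_not_mem hx hvK, hmax.1.1 hx⟩
  exact mem_filter.2 ⟨mem_powerset.2 hKs, hKne,
    hmax.mono (fun L hL => ⟨hL.1.trans (erase_subset _ _), hL.2⟩) ⟨hKs, hmax.1.2⟩⟩

theorem IsChordal.card_maximalCliquesIn_le (hG : IsChordal G) (s : Finset α) :
    #(maximalCliquesIn G s) ≤ #s := by
  induction s using Finset.strongInduction with
  | H s ih =>
  rcases s.eq_empty_or_nonempty with rfl | hs
  · simp [maximalCliquesIn]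
  obtain ⟨v, hv⟩ := hG.exists_isSimplicialIn hs
  have hsub : maximalCliquesIn G s ⊆
      insert (insert v {x ∈ s | G.Adj v x}) (maximalCliquesIn G (s.erase v)) := by
    intro K hK
    by_cases hvK : v ∈ K
    · exact mem_insert.2 (.inl (hv.eq_of_mem_maximalCliquesIn hK hvK))
    · exact mem_insert_of_mem (mem_maximalCliquesIn_erase hK hvK)
  calc #(maximalCliquesIn G s)
      ≤ #(maximalCliquesIn G (s.erase v)) + 1 :=
        (card_le_card hsub).trans (card_insert_le _ _)
    _ ≤ #(s.erase v) + 1 := by gcongr; exact ih _ (erase_ssubset hv.1)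
    _ = #s := card_erase_add_one hv.1

end

/-- every chordal graph on `n` vertices has at most `n` maximal cliques. -/
theorem stmt1 [Nonempty V] (G : SimpleGraph V) (hch : IsChordal G) :
    Fintype.card (CV G) ≤ Fintype.card V := by
  calc Fintype.card (CV G) = #{K : Finset V | MaxClique G K} := Fintype.card_subtype _
    _ ≤ #(maximalCliquesIn G univ) :=
      card_le_card fun K hK => (mem_filter.1 hK).2.mem_maximalCliquesIn_univ
    _ ≤ #(univ : Finset V) := hch.card_maximalCliquesIn_le _
    _ = Fintype.card V := card_univ
end

section
/- Let G be a connected chordal graph with layer structure rooted at a maximal clique K*. If UU' is an edge of the layer structure with label S, then every path between U and U' in the layer structure contains at least one edge with label S. -/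
/-! Let `K ∈ U`, `K' ∈ U'` be adjacent in `C(G)` with `K ∩ K' = S`. The edge crosses two
units, so it has minimum weight `|S| = w`, and `S` separates some `u ∈ K \ K'` from some
`v ∈ K' \ K`. Call a unit good if one of its cliques meets the component `C` of `u` in
`G - S`. An edge of `C(G)` whose label is not `S` has weight `≥ |S|`, so its label is not
contained in `S`: its two cliques share a vertex outside `S` and hence meet the same
components of `G - S`. Thus all cliques of a unit agree on meeting `C`, and goodness can
change along a layer edge only if that edge is labelled `S`. Since `U` is good and `U'` is
not, any `U`-`U'` walk crosses such an edge. -/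

open SimpleGraph

attribute [local instance] Classical.propDecidable
set_option linter.unusedSectionVars false

variable {V : Type*} [Fintype V] [DecidableEq V]

section InducedComponents

variable {W : Type*} {H : SimpleGraph W} {S : Set W}

theorem SimpleGraph.Reachable.iff_of_forall_adj {P : W → Prop}
    (hP : ∀ a b, H.Adj a b → (P a ↔ P b)) {a b : W} (h : H.Reachable a b) : P a ↔ P b := by
  obtain ⟨q⟩ := h
  induction q with
  | nil => rfl
  | cons hab _ ih => exact (hP _ _ hab).trans ih

theorem SimpleGraph.IsClique.reachable_induce_compl {K : Set W} (hK : H.IsClique K)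
    {x y : ↥Sᶜ} (hx : ↑x ∈ K) (hy : ↑y ∈ K) : (H.induce Sᶜ).Reachable x y := by
  obtain rfl | hxy := eq_or_ne x y
  · rfl
  · exact Adj.reachable (hK hx hy (Subtype.coe_injective.ne hxy))

def ComponentMeets (C : (H.induce Sᶜ).ConnectedComponent) (K : Set W) : Prop :=
  ∃ x ∈ C.supp, ↑x ∈ K

theorem SimpleGraph.IsClique.componentMeets_iff {K : Set W} (hK : H.IsClique K)
    (C : (H.induce Sᶜ).ConnectedComponent) {x : ↥Sᶜ} (hx : ↑x ∈ K) :
    ComponentMeets C K ↔ x ∈ C.supp := by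
  refine ⟨fun ⟨y, hy, hyK⟩ => ?_, fun h => ⟨x, h, hx⟩⟩
  rw [ConnectedComponent.mem_supp_iff] at hy ⊢
  rw [← hy]
  exact ConnectedComponent.sound (hK.reachable_induce_compl hx hyK)

theorem SimpleGraph.IsClique.componentMeets_iff_of_not_subset {K K' : Set W}
    (hK : H.IsClique K) (hK' : H.IsClique K') (h : ¬ K ∩ K' ⊆ S)
    (C : (H.induce Sᶜ).ConnectedComponent) : ComponentMeets C K ↔ ComponentMeets C K' := by
  obtain ⟨x, ⟨hxK, hxK'⟩, hxS⟩ := Set.not_subset.mp h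
  rw [hK.componentMeets_iff C (x := ⟨x, hxS⟩) hxK,
    hK'.componentMeets_iff C (x := ⟨x, hxS⟩) hxK']

end InducedComponents

section LayerStructure

variable {G : SimpleGraph V} {w : ℕ}

lemma Separates.not_reachable_induce_compl {S : Finset V} {u v : V} (h : Separates G S u v)
    {x y : ↥(↑S : Set V)ᶜ} (hx : ↑x = u) (hy : ↑y = v) :
    ¬ (G.induce (↑S)ᶜ).Reachable x y := by
  subst hx hy
  rintro ⟨q⟩
  let φ := (Embedding.induce (G := G) (↑S)ᶜ).toHom
  have h' : Separates G S (φ x) (φ y) := h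
  obtain ⟨x, hx, hxS⟩ := h'.2.2 (q.map φ)
  rw [Walk.support_map, List.mem_map] at hx
  obtain ⟨y, -, rfl⟩ := hx
  exact y.2 hxS

lemma MaxClique.sdiff_nonempty {K K' : Finset V} (hK : MaxClique G K)
    (hK' : G.IsClique (K' : Set V)) (hne : K ≠ K') : (K \ K').Nonempty := by
  rw [Finset.sdiff_nonempty]
  exact fun hsub => hne (hK.2 K' hK' hsub)

lemma card_inter_eq_of_umk_ne {K K' : CV G} (h : (cliqueGraph G).Adj K K')
    (hU : umk G w K ≠ umk G w K') : (K.1 ∩ K'.1).card = w := by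
  by_contra hw
  exact hU (ConnectedComponent.sound (Adj.reachable (G := unitGraph G w) ⟨h, hw⟩))

lemma IsMinEdgeWeight.inter_eq_of_subset (hw : IsMinEdgeWeight G w) {S : Finset V}
    (hS : S.card = w) {K K' : CV G} (h : (cliqueGraph G).Adj K K') (hsub : K.1 ∩ K'.1 ⊆ S) :
    K.1 ∩ K'.1 = S :=
  Finset.eq_of_subset_of_card_le hsub (hS ▸ hw.2 K K' h)

lemma componentMeets_iff_of_inter_not_subset {S : Finset V} {K K' : CV G}
    (h : ¬ K.1 ∩ K'.1 ⊆ S) (C : (G.induce (↑S)ᶜ).ConnectedComponent) :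
    ComponentMeets C ↑K.1 ↔ ComponentMeets C ↑K'.1 := by
  refine K.2.1.componentMeets_iff_of_not_subset K'.2.1 ?_ C
  rwa [← Finset.coe_inter, Finset.coe_subset]

lemma componentMeets_iff_of_umk_eq (hw : IsMinEdgeWeight G w) {S : Finset V} (hS : S.card = w)
    (C : (G.induce (↑S)ᶜ).ConnectedComponent) {K K' : CV G} (h : umk G w K = umk G w K') :
    ComponentMeets C ↑K.1 ↔ ComponentMeets C ↑K'.1 := by
  exact (ConnectedComponent.exact h).iff_of_forall_adj
    (P := fun K : CV G => ComponentMeets C ↑K.1) fun a b (hab : (unitGraph G w).Adj a b) =>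
      componentMeets_iff_of_inter_not_subset
        (fun hsub => hab.2 (hw.inter_eq_of_subset hS hab.1 hsub ▸ hS)) C

end LayerStructure

theorem stmt7_general (G : SimpleGraph V)
    (w : ℕ) (hw : IsMinEdgeWeight G w)
    (U U' : LUnit G w) (hadj : (layerGraph G w).Adj U U')
    (S : Finset V)
    (hS : ∃ K K' : CV G, (cliqueGraph G).Adj K K' ∧ umk G w K = U ∧ umk G w K' = U' ∧
      K.1 ∩ K'.1 = S)
    (p : (layerGraph G w).Walk U U') :
    ∃ U1 U2 : LUnit G w, s(U1, U2) ∈ p.edges ∧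
      ∃ K1 K2 : CV G, (cliqueGraph G).Adj K1 K2 ∧ umk G w K1 = U1 ∧ umk G w K2 = U2 ∧
        K1.1 ∩ K2.1 = S := by
  obtain ⟨K0, K0', hK0, rfl, rfl, rfl⟩ := hS
  have hcard := card_inter_eq_of_umk_ne hK0 hadj.1
  have hne : K0.1 ≠ K0'.1 := Subtype.coe_injective.ne hK0.1
  obtain ⟨u, hu⟩ := K0.2.sdiff_nonempty K0'.2.1 hne
  obtain ⟨v, hv⟩ := K0'.2.sdiff_nonempty K0.2.1 hne.symm
  have hsep := (hK0.2 u hu v hv).1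
  let C := (G.induce (↑(K0.1 ∩ K0'.1))ᶜ).connectedComponentMk ⟨u, hsep.1⟩
  let 𝒰 : Set (LUnit G w) := {U | ∃ K, umk G w K = U ∧ ComponentMeets C ↑K.1}
  have hmem : ∀ K, umk G w K ∈ 𝒰 ↔ ComponentMeets C ↑K.1 := fun K =>
    ⟨fun ⟨_, hK', h⟩ => (componentMeets_iff_of_umk_eq hw hcard C hK').mp h,
      fun h => ⟨K, rfl, h⟩⟩
  have hU : umk G w K0 ∈ 𝒰 := (hmem K0).2 ⟨_, rfl, (Finset.mem_sdiff.1 hu).1⟩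
  have hU' : umk G w K0' ∉ 𝒰 := by
    rw [hmem, K0'.2.1.componentMeets_iff C (x := ⟨v, hsep.2.1⟩) (Finset.mem_sdiff.1 hv).1,
      ConnectedComponent.mem_supp_iff, ConnectedComponent.eq]
    exact fun h => hsep.not_reachable_induce_compl rfl rfl h.symm
  obtain ⟨d, hd, hd1, hd2⟩ := p.exists_boundary_dart 𝒰 hU hU'
  obtain ⟨-, K1, K2, hK12, hK1, hK2⟩ := d.adj
  refine ⟨_, _, p.edges_eq_map_darts ▸ List.mem_map_of_mem hd, K1, K2, hK12, hK1, hK2,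
    hw.inter_eq_of_subset hcard hK12 ?_⟩
  by_contra hsub
  rw [← hK1, hmem] at hd1
  rw [← hK2, hmem] at hd2
  exact hd2 ((componentMeets_iff_of_inter_not_subset hsub C).mp hd1)

/-- if `UU'` is an edge of the layer structure with label `S`, then every
path between `U` and `U'` in the layer structure contains an edge with label `S`. -/
theorem stmt7 (G : SimpleGraph V) (hG : G.Connected) (hch : IsChordal G)
    (w : ℕ) (hw : IsMinEdgeWeight G w) (Kstar : CV G)
    (U U' : LUnit G w) (hadj : (layerGraph G w).Adj U U')
    (S : Finset V)
    (hS : ∃ K K' : CV G, (cliqueGraph G).Adj K K' ∧ umk G w K = U ∧ umk G w K' = U' ∧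
      K.1 ∩ K'.1 = S)
    (p : (layerGraph G w).Walk U U') (hp : p.IsPath) :
    ∃ U1 U2 : LUnit G w, s(U1, U2) ∈ p.edges ∧
      ∃ K1 K2 : CV G, (cliqueGraph G).Adj K1 K2 ∧ umk G w K1 = U1 ∧ umk G w K2 = U2 ∧
        K1.1 ∩ K2.1 = S :=
  stmt7_general G w hw U U' hadj S hS p
end
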